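/- Let q be a prime power and let M be the set of midland points of PG(2,q). Define ψ : (F_q^*)² → M by ψ(a,b) = (a:b:1). Then ψ is a bijection, and for every x ∈ (F_q^*)², ψ(QW(x)) = M ∩ W(ψ(x)); consequently, for X ⊆ (F_q^*)², the quowers QW(x), x ∈ X, cover (F_q^*)² \ D(1,1) if and only if the wind roses {W(ψ(x)) : x ∈ X} ∪ {W(0:0:1), W(1:1:0)} cover PG(2,q). -/
import Mathlib


open Projectivization Classical

variable (F : Type*) [Field F] [Fintype F] [DecidableEq F]

noncomputable def cardPt (i : Fin 3) : Projectivization F (Fin 3 → F) :=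
  Projectivization.mk F (Pi.single i 1) (by intro h; simpa using congrFun h i)

noncomputable def pline (u v : Projectivization F (Fin 3 → F)) :
    Set (Projectivization F (Fin 3 → F)) :=
  if u = v then {u}
  else {p | p.submodule ≤ u.submodule ⊔ v.submodule}

noncomputable def windRose (p : Projectivization F (Fin 3 → F)) :
    Set (Projectivization F (Fin 3 → F)) :=
  pline F p (cardPt F 0) ∪ pline F p (cardPt F 1) ∪ pline F p (cardPt F 2)

noncomputable def nnz (p : Projectivization F (Fin 3 → F)) : ℕ :=
  (Finset.univ.filter fun i : Fin 3 => p.rep i ≠ 0).card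

def IsCardinal (p : Projectivization F (Fin 3 → F)) : Prop := nnz F p = 1
def IsCoast (p : Projectivization F (Fin 3 → F)) : Prop := nnz F p = 2
def IsMidland (p : Projectivization F (Fin 3 → F)) : Prop := nnz F p = 3

def extBall (v : Fin 3 → F) : Set (Fin 3 → F) :=
  {w | ∃ u ∈ Submodule.span F ({v} : Set (Fin 3 → F)), hammingDist w u ≤ 1}

def gdiag (G : Type*) [Group G] (p : G × G) : Set (G × G) :=
  {q | ∃ t : G, q = (t * p.1, t * p.2)}

def ghoriz (G : Type*) [Group G] (p : G × G) : Set (G × G) :=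
  {q | ∃ t : G, q = (t, p.2)}

def gvert (G : Type*) [Group G] (p : G × G) : Set (G × G) :=
  {q | ∃ t : G, q = (p.1, t)}

def gquower (G : Type*) [Group G] (p : G × G) : Set (G × G) :=
  gdiag G p ∪ ghoriz G p ∪ gvert G p

noncomputable def psiMap (F : Type*) [Field F] [Fintype F] [DecidableEq F]
    (x : Fˣ × Fˣ) : Projectivization F (Fin 3 → F) :=
  Projectivization.mk F ![(x.1 : F), (x.2 : F), 1]
    (by intro h; simpa using congrFun h 2)

section Aux
variable {F : Type*} [Field F] [Fintype F] [DecidableEq F]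

lemma aux_mem_pline {u v w : Fin 3 → F} (hu : u ≠ 0) (hv : v ≠ 0) (hw : w ≠ 0)
    (hne : Projectivization.mk F u hu ≠ Projectivization.mk F v hv) :
    Projectivization.mk F w hw ∈ pline F (Projectivization.mk F u hu) (Projectivization.mk F v hv)
      ↔ ∃ a b : F, a • u + b • v = w := by
  unfold pline
  rw [if_neg hne]
  simp only [Set.mem_setOf_eq, Projectivization.submodule_mk]
  rw [← Submodule.span_union, Set.singleton_union, Submodule.span_singleton_le_iff_mem]
  exact Submodule.mem_span_pair

lemma nnz_mk (w : Fin 3 → F) (hw : w ≠ 0) :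
    nnz F (Projectivization.mk F w hw) = (Finset.univ.filter fun i => w i ≠ 0).card := by
  obtain ⟨a, ha⟩ := Projectivization.exists_smul_eq_mk_rep F w hw
  unfold nnz
  congr 1
  apply Finset.filter_congr
  intro i _
  rw [← ha]
  simp [Units.smul_def]

lemma midland_mk (w : Fin 3 → F) (hw : w ≠ 0) :
    IsMidland F (Projectivization.mk F w hw) ↔ ∀ i, w i ≠ 0 := by
  rw [IsMidland, nnz_mk]
  constructor
  · intro h i
    have h2 : (Finset.univ.filter fun i => w i ≠ 0) = Finset.univ :=
      Finset.eq_univ_of_card _ (by simpa using h)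
    have := Finset.mem_filter.mp (h2.symm ▸ Finset.mem_univ i)
    exact this.2
  · intro h
    rw [Finset.filter_true_of_mem (fun i _ => h i)]
    simp

end Aux
set_option linter.unusedSectionVars false
section Aux2
variable {F : Type*} [Field F] [Fintype F] [DecidableEq F]

lemma psi_inj : Function.Injective (psiMap F) := by
  rintro ⟨a, b⟩ ⟨c, d⟩ h
  unfold psiMap at h
  rw [Projectivization.mk_eq_mk_iff] at h
  obtain ⟨t, ht⟩ := h
  have h2 := congrFun ht 2
  have h0 := congrFun ht 0
  have h1 := congrFun ht 1
  simp [Units.smul_def] at h0 h1 h2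
  rw [h2] at h0 h1
  simp only [Units.val_one, one_mul] at h0 h1
  exact Prod.ext (Units.ext h0.symm) (Units.ext h1.symm)

lemma psi_eq_mk (x : Fˣ × Fˣ) :
    psiMap F x = Projectivization.mk F ![(x.1 : F), (x.2 : F), 1]
      (by intro h; simpa using congrFun h 2) := rfl

lemma midland_psi (x : Fˣ × Fˣ) : IsMidland F (psiMap F x) := by
  rw [psi_eq_mk, midland_mk]
  intro i
  fin_cases i <;> simp

lemma eq_psi (w : Fin 3 → F) (hw : w ≠ 0) (h0 : w 0 ≠ 0) (h1 : w 1 ≠ 0) (h2 : w 2 ≠ 0) :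
    Projectivization.mk F w hw =
      psiMap F (Units.mk0 (w 0 / w 2) (div_ne_zero h0 h2),
                Units.mk0 (w 1 / w 2) (div_ne_zero h1 h2)) := by
  rw [psi_eq_mk, Projectivization.mk_eq_mk_iff']
  refine ⟨w 2, funext fun i => ?_⟩
  fin_cases i <;> simp <;> field_simp

lemma range_psi : Set.range (psiMap F) = {p | IsMidland F p} := by
  ext p
  constructor
  · rintro ⟨x, rfl⟩
    exact midland_psi x
  · intro hp
    induction p using Projectivization.ind with
    | h w hw =>
      rw [Set.mem_setOf_eq, midland_mk] at hp
      exact ⟨_, (eq_psi w hw (hp 0) (hp 1) (hp 2)).symm⟩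

lemma cardPt_eq_mk (i : Fin 3) :
    cardPt F i = Projectivization.mk F (Pi.single i 1)
      (by intro h; simpa using congrFun h i) := rfl

lemma psi_ne_card (x : Fˣ × Fˣ) (i : Fin 3) : psiMap F x ≠ cardPt F i := by
  intro h
  have h3 : IsMidland F (cardPt F i) := h ▸ midland_psi x
  rw [cardPt_eq_mk, midland_mk] at h3
  fin_cases i
  · exact h3 1 (by simp)
  · exact h3 0 (by simp)
  · exact h3 0 (by simp)

end Aux2
section Aux3
variable {F : Type*} [Field F] [Fintype F] [DecidableEq F]

lemma mem_pline_psi_card (x : Fˣ × Fˣ) (i : Fin 3) (w : Fin 3 → F) (hw : w ≠ 0) :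
    Projectivization.mk F w hw ∈ pline F (psiMap F x) (cardPt F i) ↔
      ∃ a b : F, a • ![(x.1 : F), (x.2 : F), 1] + b • (Pi.single i 1 : Fin 3 → F) = w :=
  aux_mem_pline _ _ hw (psi_ne_card x i)

lemma image_quower (x : Fˣ × Fˣ) :
    psiMap F '' gquower Fˣ x = {p | IsMidland F p} ∩ windRose F (psiMap F x) := by
  obtain ⟨a, b⟩ := x
  ext p
  simp only [Set.mem_image, Set.mem_inter_iff, Set.mem_setOf_eq]
  constructor
  · rintro ⟨q, hq, rfl⟩
    refine ⟨midland_psi q, ?_⟩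
    simp only [gquower, gdiag, ghoriz, gvert, Set.mem_union, Set.mem_setOf_eq] at hq
    rcases hq with (⟨t, rfl⟩ | ⟨t, rfl⟩) | ⟨t, rfl⟩
    · exact Or.inr ((mem_pline_psi_card (a, b) 2 _ _).mpr
        ⟨(t : F), 1 - (t : F), by funext i; fin_cases i <;> simp [Pi.single_apply]⟩)
    · exact Or.inl (Or.inl ((mem_pline_psi_card (a, b) 0 _ _).mpr
        ⟨1, (t : F) - (a : F), by funext i; fin_cases i <;> simp [Pi.single_apply]⟩))
    · exact Or.inl (Or.inr ((mem_pline_psi_card (a, b) 1 _ _).mpr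
        ⟨1, (t : F) - (b : F), by funext i; fin_cases i <;> simp [Pi.single_apply]⟩))
  · rintro ⟨hm, hw⟩
    obtain ⟨⟨c, d⟩, rfl⟩ : ∃ y, psiMap F y = p := by
      rw [← Set.mem_range, range_psi]; exact hm
    rcases hw with (h0 | h1) | h2
    · obtain ⟨s, r, hsr⟩ := (mem_pline_psi_card (a, b) 0 _ _).mp h0
      have e1 := congrFun hsr 1
      have e2 := congrFun hsr 2
      simp [Pi.single_apply] at e1 e2
      refine ⟨(c, d), Or.inl (Or.inr ⟨c, ?_⟩), rfl⟩
      have : (d : F) = b := by rw [← e1, e2, one_mul]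
      exact Prod.ext rfl (Units.ext this)
    · obtain ⟨s, r, hsr⟩ := (mem_pline_psi_card (a, b) 1 _ _).mp h1
      have e0 := congrFun hsr 0
      have e2 := congrFun hsr 2
      simp [Pi.single_apply] at e0 e2
      refine ⟨(c, d), Or.inr ⟨d, ?_⟩, rfl⟩
      have : (c : F) = a := by rw [← e0, e2, one_mul]
      exact Prod.ext (Units.ext this) rfl
    · obtain ⟨s, r, hsr⟩ := (mem_pline_psi_card (a, b) 2 _ _).mp h2
      have e0 := congrFun hsr 0
      have e1 := congrFun hsr 1
      simp [Pi.single_apply] at e0 e1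
      have hs : s ≠ 0 := by
        intro h; rw [h, zero_mul] at e0; exact c.ne_zero e0.symm
      refine ⟨(c, d), Or.inl (Or.inl ⟨Units.mk0 s hs, ?_⟩), rfl⟩
      exact Prod.ext (Units.ext (by simp [← e0])) (Units.ext (by simp [← e1]))
end Aux3
section Aux4
variable {F : Type*} [Field F] [Fintype F] [DecidableEq F]

lemma v001_ne : (![0, 0, 1] : Fin 3 → F) ≠ 0 := by intro h; simpa using congrFun h 2
lemma v110_ne : (![1, 1, 0] : Fin 3 → F) ≠ 0 := by intro h; simpa using congrFun h 0

lemma z1_eq_c2 : Projectivization.mk F ![0, 0, 1] v001_ne = cardPt F 2 := by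
  rw [cardPt_eq_mk, Projectivization.mk_eq_mk_iff']
  exact ⟨1, by funext i; fin_cases i <;> simp [Pi.single_apply]⟩

lemma z1_ne_c0 : Projectivization.mk F ![0, 0, 1] v001_ne ≠ cardPt F 0 := by
  intro hteq
  rw [cardPt_eq_mk, Projectivization.mk_eq_mk_iff] at hteq
  obtain ⟨t, ht⟩ := hteq
  simpa [Pi.single_apply] using congrFun ht 2

lemma z1_ne_c1 : Projectivization.mk F ![0, 0, 1] v001_ne ≠ cardPt F 1 := by
  intro hteq
  rw [cardPt_eq_mk, Projectivization.mk_eq_mk_iff] at hteq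
  obtain ⟨t, ht⟩ := hteq
  simpa [Pi.single_apply] using congrFun ht 2

lemma z2_ne_c0 : Projectivization.mk F ![1, 1, 0] v110_ne ≠ cardPt F 0 := by
  intro hteq
  rw [cardPt_eq_mk, Projectivization.mk_eq_mk_iff] at hteq
  obtain ⟨t, ht⟩ := hteq
  simpa [Pi.single_apply] using congrFun ht 1

lemma z2_ne_c1 : Projectivization.mk F ![1, 1, 0] v110_ne ≠ cardPt F 1 := by
  intro hteq
  rw [cardPt_eq_mk, Projectivization.mk_eq_mk_iff] at hteq
  obtain ⟨t, ht⟩ := hteq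
  simpa [Pi.single_apply] using congrFun ht 0

lemma z2_ne_c2 : Projectivization.mk F ![1, 1, 0] v110_ne ≠ cardPt F 2 := by
  intro hteq
  rw [cardPt_eq_mk, Projectivization.mk_eq_mk_iff] at hteq
  obtain ⟨t, ht⟩ := hteq
  simpa [Pi.single_apply] using congrFun ht 0

lemma mem_wr_z1 (w : Fin 3 → F) (hw : w ≠ 0) :
    Projectivization.mk F w hw ∈ windRose F (Projectivization.mk F ![0, 0, 1] v001_ne) ↔
      w 0 = 0 ∨ w 1 = 0 := by
  unfold windRose
  simp only [Set.mem_union]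
  constructor
  · rintro ((h | h) | h)
    · obtain ⟨a, b, hab⟩ := (aux_mem_pline _ _ hw z1_ne_c0).mp h
      refine Or.inr ?_
      have := congrFun hab 1
      simpa [Pi.single_apply] using this.symm
    · obtain ⟨a, b, hab⟩ := (aux_mem_pline _ _ hw z1_ne_c1).mp h
      refine Or.inl ?_
      have := congrFun hab 0
      simpa [Pi.single_apply] using this.symm
    · rw [pline, if_pos z1_eq_c2, Set.mem_singleton_iff,
        Projectivization.mk_eq_mk_iff'] at h
      obtain ⟨a, ha⟩ := h
      refine Or.inl ?_
      simpa using (congrFun ha 0).symm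
  · rintro (h | h)
    · refine Or.inl (Or.inr ((aux_mem_pline _ _ hw z1_ne_c1).mpr ⟨w 2, w 1, ?_⟩))
      funext i; fin_cases i <;> simp [Pi.single_apply] <;> simp [h]
    · refine Or.inl (Or.inl ((aux_mem_pline _ _ hw z1_ne_c0).mpr ⟨w 2, w 0, ?_⟩))
      funext i; fin_cases i <;> simp [Pi.single_apply] <;> simp [h]

lemma mem_wr_z2 (w : Fin 3 → F) (hw : w ≠ 0) :
    Projectivization.mk F w hw ∈ windRose F (Projectivization.mk F ![1, 1, 0] v110_ne) ↔
      w 2 = 0 ∨ w 0 = w 1 := by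
  unfold windRose
  simp only [Set.mem_union]
  constructor
  · rintro ((h | h) | h)
    · obtain ⟨a, b, hab⟩ := (aux_mem_pline _ _ hw z2_ne_c0).mp h
      refine Or.inl ?_
      have := congrFun hab 2
      simpa [Pi.single_apply] using this.symm
    · obtain ⟨a, b, hab⟩ := (aux_mem_pline _ _ hw z2_ne_c1).mp h
      refine Or.inl ?_
      have := congrFun hab 2
      simpa [Pi.single_apply] using this.symm
    · obtain ⟨a, b, hab⟩ := (aux_mem_pline _ _ hw z2_ne_c2).mp h
      refine Or.inr ?_
      have h0 := congrFun hab 0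
      have h1 := congrFun hab 1
      simp [Pi.single_apply] at h0 h1
      rw [← h0, ← h1]
  · rintro (h | h)
    · refine Or.inl (Or.inl ((aux_mem_pline _ _ hw z2_ne_c0).mpr ⟨w 1, w 0 - w 1, ?_⟩))
      funext i; fin_cases i <;> simp [Pi.single_apply] <;> simp [h]
    · refine Or.inr ((aux_mem_pline _ _ hw z2_ne_c2).mpr ⟨w 0, w 2, ?_⟩)
      funext i; fin_cases i <;> simp [Pi.single_apply] <;> simp [h]
end Aux4
theorem stmt_18 (F : Type*) [Field F] [Fintype F] [DecidableEq F] :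
    Function.Injective (psiMap F) ∧
    Set.range (psiMap F) = {p | IsMidland F p} ∧
    (∀ x : Fˣ × Fˣ, psiMap F '' gquower Fˣ x =
      {p | IsMidland F p} ∩ windRose F (psiMap F x)) ∧
    (∀ X : Set (Fˣ × Fˣ),
      (Set.univ \ gdiag Fˣ (1, 1) ⊆ ⋃ x ∈ X, gquower Fˣ x) ↔
      ((⋃ x ∈ X, windRose F (psiMap F x)) ∪
        windRose F (Projectivization.mk F ![0, 0, 1] (by intro h; simpa using congrFun h 2)) ∪
        windRose F (Projectivization.mk F ![1, 1, 0] (by intro h; simpa using congrFun h 0)) =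
        Set.univ)) := by
  refine ⟨psi_inj, range_psi, image_quower, fun X => ?_⟩
  constructor
  · intro hcov
    ext p
    simp only [Set.mem_univ, iff_true, Set.mem_union]
    induction p using Projectivization.ind with
    | h w hw =>
      by_cases h0 : w 0 = 0
      · exact Or.inl (Or.inr ((mem_wr_z1 w hw).mpr (Or.inl h0)))
      by_cases h1 : w 1 = 0
      · exact Or.inl (Or.inr ((mem_wr_z1 w hw).mpr (Or.inr h1)))
      by_cases h2 : w 2 = 0
      · exact Or.inr ((mem_wr_z2 w hw).mpr (Or.inl h2))
      by_cases hd : w 0 = w 1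
      · exact Or.inr ((mem_wr_z2 w hw).mpr (Or.inr hd))
      · set c : Fˣ := Units.mk0 (w 0 / w 2) (div_ne_zero h0 h2) with hc
        set d : Fˣ := Units.mk0 (w 1 / w 2) (div_ne_zero h1 h2) with hdd
        have hmk : Projectivization.mk F w hw = psiMap F (c, d) := eq_psi w hw h0 h1 h2
        have hnd : (c, d) ∉ gdiag Fˣ (1, 1) := by
          rintro ⟨t, ht⟩
          simp only [Prod.ext_iff, Prod.fst, Prod.snd, mul_one] at ht
          have hcd : c = d := ht.1.trans ht.2.symm
          have hv : w 0 / w 2 = w 1 / w 2 := by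
            have := congrArg Units.val hcd
            simpa [hc, hdd] using this
          apply hd
          field_simp at hv
          exact hv
        obtain ⟨x, hxX, hx⟩ := Set.mem_iUnion₂.mp (hcov ⟨trivial, hnd⟩)
        refine Or.inl (Or.inl (Set.mem_biUnion hxX ?_))
        have h3 : psiMap F (c, d) ∈ {p | IsMidland F p} ∩ windRose F (psiMap F x) := by
          rw [← image_quower]
          exact ⟨(c, d), hx, rfl⟩
        rw [hmk]
        exact h3.2
  · intro hU
    rintro ⟨c, d⟩ ⟨-, hnd⟩
    have hne : c ≠ d := fun h => hnd ⟨c, by simp [h]⟩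
    have hp := Set.eq_univ_iff_forall.mp hU (psiMap F (c, d))
    rcases hp with (hp | hp) | hp
    · obtain ⟨x, hxX, hpx⟩ := Set.mem_iUnion₂.mp hp
      have h3 : psiMap F (c, d) ∈ psiMap F '' gquower Fˣ x := by
        rw [image_quower]
        exact ⟨midland_psi _, hpx⟩
      obtain ⟨y, hy, hyeq⟩ := h3
      exact Set.mem_iUnion₂.mpr ⟨x, hxX, psi_inj hyeq ▸ hy⟩
    · have h3 := (mem_wr_z1 (![(c : F), (d : F), 1]) (by intro h; simpa using congrFun h 2)).mp hp
      simp at h3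
    · have h3 := (mem_wr_z2 (![(c : F), (d : F), 1]) (by intro h; simpa using congrFun h 2)).mp hp
      simp at h3
      exact absurd (Units.ext h3) hne
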